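/- Let D=(V,A) be an (S,f)-proper directed graph. There exists a D*-rooted connector of size exactly opt_D if and only if there exists a complete D_+*-intersection I with w(I) = opt_D, where D_+ is D with opt_D parallel copies added to every arc and w is 0 on A* and 1 on the added arcs. -/

import Mathlib

open Finset

attribute [local instance] Classical.propDecidable

universe u v

/-- One step from `u` to `w` along an arc belonging to `P`. -/
def ArcStep {V E : Type} (tl hd : E → V) (P : Set E) (u w : V) : Prop :=
  ∃ e ∈ P, tl e = u ∧ hd e = w

/-- Directed reachability from `u` to `w` using only arcs in `P`. -/
def ArcReach {V E : Type} (tl hd : E → V) (P : Set E) (u w : V) : Prop :=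
  Relation.ReflTransGen (ArcStep tl hd P) u w

/-- Connectivity in the underlying undirected graph, using only arcs in `P`. -/
def UConn {V E : Type} (tl hd : E → V) (P : Set E) (u w : V) : Prop :=
  Relation.ReflTransGen (fun a b => ArcStep tl hd P a b ∨ ArcStep tl hd P b a) u w

/-- `R_D(v)`: the set of specified vertices (in `S`) reachable from `v`. -/
noncomputable def RD {V E : Type} (tl hd : E → V) (S : Finset V) (v : V) : Finset V :=
  S.filter (fun s => ArcReach tl hd Set.univ v s)

/-- `f(R_D(v))`. -/
noncomputable def fR {V E : Type} (tl hd : E → V) (S : Finset V) (f : V → ℕ) (v : V) : ℕ :=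
  ∑ s ∈ RD tl hd S v, f s

/-- `T` is an in-tree rooted at `root` spanning the vertex set `span`:
every non-root vertex of `span` has a unique outgoing arc in `T`, the root has none,
all arcs stay inside `span`, and every vertex of `span` reaches the root within `T`. -/
structure IsInTree {V E : Type} (tl hd : E → V) (root : V) (span : Set V)
    (T : Finset E) : Prop where
  mem_tail : ∀ e ∈ T, tl e ∈ span
  mem_head : ∀ e ∈ T, hd e ∈ span
  root_mem : root ∈ span
  out_unique : ∀ v ∈ span, v ≠ root → ∃! e, e ∈ T ∧ tl e = v
  root_no_out : ∀ e ∈ T, tl e ≠ root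
  reaches_root : ∀ v ∈ span, ArcReach tl hd (↑T : Set E) v root

/-- Index type for a `D`-canonical family: for each `s ∈ S` there are `f s` indices. -/
def TreeIdx {V : Type} (S : Finset V) (f : V → ℕ) : Type :=
  Σ s : {x : V // x ∈ S}, Fin (f s.1)

noncomputable instance {V : Type} (S : Finset V) (f : V → ℕ) : Fintype (TreeIdx S f) := by
  unfold TreeIdx; infer_instance

/-- The family `T` is a `D`-canonical set of in-trees: for each `s ∈ S` and each
`j < f s`, the corresponding member is an in-tree rooted at `s` spanning the set of
vertices from which `s` is reachable. -/
def IsCanonical {V E : Type} (tl hd : E → V) (S : Finset V) (f : V → ℕ)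
    (T : TreeIdx S f → Finset E) : Prop :=
  ∀ i : TreeIdx S f,
    IsInTree tl hd i.1.1 {v | ArcReach tl hd Set.univ v i.1.1} (T i)

/-- The family covers all arcs. -/
def CoversAll {V E : Type} {S : Finset V} {f : V → ℕ}
    (T : TreeIdx S f → Finset E) : Prop :=
  ∀ e : E, ∃ i, e ∈ T i

/-- The members of the family are pairwise arc-disjoint. -/
def ArcDisjointFam {V E : Type} {S : Finset V} {f : V → ℕ}
    (T : TreeIdx S f → Finset E) : Prop :=
  ∀ i j, i ≠ j → Disjoint (T i) (T j)

/-- Tail map of `D*`: vertices are `Option V` (`none` is the apex `s*`); arcs are the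
arcs of `D` together with, for each `s ∈ S`, `f s` parallel arcs from `s` to `s*`. -/
def starTail {V E : Type} (tl : E → V) (S : Finset V) (f : V → ℕ) :
    E ⊕ TreeIdx S f → Option V :=
  Sum.elim (fun e => some (tl e)) (fun p => some p.1.1)

/-- Head map of `D*`. -/
def starHead {V E : Type} (hd : E → V) (S : Finset V) (f : V → ℕ) :
    E ⊕ TreeIdx S f → Option V :=
  Sum.elim (fun e => some (hd e)) (fun _ => none)

/-- `λ(u,w) ≥ k`: every cut separating `u` from `w` contains at least `k` arcs. -/
def LambdaGe {V' E' : Type} (tl hd : E' → V') (u w : V') (k : ℕ) : Prop :=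
  ∀ W : Set V', u ∈ W → w ∉ W → k ≤ Nat.card {e : E' // tl e ∈ W ∧ hd e ∉ W}

/-- `D` is `(S,f)`-proper: `|δ_{D*}(v)| ≤ f(R_D(v))` for all `v ∈ V`. -/
def IsProper {V E : Type} (tl hd : E → V) (S : Finset V) (f : V → ℕ) : Prop :=
  ∀ v : V,
    Nat.card {e : E ⊕ TreeIdx S f // starTail tl S f e = some v} ≤ fR tl hd S f v

/-- `B` (given by `tB, hB`) is a `D*`-rooted connector:
`λ(v, s*; D* + B) ≥ f(R_D(v))` for every vertex `v`. -/
def IsRootedConnector {V E B : Type} (tl hd : E → V) (S : Finset V) (f : V → ℕ)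
    (tB hB : B → V) : Prop :=
  ∀ v : V,
    LambdaGe (starTail (Sum.elim tl tB) S f) (starHead (Sum.elim hd hB) S f)
      (some v) none (fR tl hd S f v)

/-- Arcs of `B` are parallel to arcs of `A`. -/
def ParallelTo {V E B : Type} (tl hd : E → V) (tB hB : B → V) : Prop :=
  ∀ b : B, ∃ e : E, tl e = tB b ∧ hd e = hB b

/-- `T` is a spanning tree (of the underlying undirected graph) on the vertex set
`span`: all arcs stay inside `span`, `span` is connected via `T`, and
`|T| + 1 = |span|`. -/
def IsSpanTree {V' E' : Type} (tl hd : E' → V') (span : Set V') (T : Finset E') : Prop :=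
  (∀ e ∈ T, tl e ∈ span ∧ hd e ∈ span) ∧
  (∀ u ∈ span, ∀ w ∈ span, UConn tl hd (↑T : Set E') u w) ∧
  T.card + 1 = Nat.card span

/-- The vertex set `V^i_D ∪ {s*}` of `D*`: the apex together with all vertices from
which `s` is reachable in `D`. -/
def starSpan {V E : Type} (tl hd : E → V) (s : V) : Set (Option V) :=
  {x | x = none ∨ ∃ v : V, x = some v ∧ ArcReach tl hd Set.univ v s}

/-- `I` is a complete `D*`-intersection: `I` partitions into sets `J i`
(for `i` ranging over the `f s` copies, `s ∈ S`), each forming a spanning tree of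
`V^i_D ∪ {s*}` in `D*`, and `|δ_{D*}(v) ∩ I| = f(R_D(v))` for every `v ∈ V` while no
arc of `I` has tail `s*`. -/
def CompleteIntersection {V E : Type} (tl hd : E → V) (S : Finset V) (f : V → ℕ)
    (I : Finset (E ⊕ TreeIdx S f)) : Prop :=
  (∃ J : TreeIdx S f → Finset (E ⊕ TreeIdx S f),
    (∀ i j, i ≠ j → Disjoint (J i) (J j)) ∧
    (∀ e, e ∈ I ↔ ∃ i, e ∈ J i) ∧
    (∀ i : TreeIdx S f,
      IsSpanTree (starTail tl S f) (starHead hd S f) (starSpan tl hd i.1.1) (J i))) ∧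
  (∀ v : V, (I.filter (fun e => starTail tl S f e = some v)).card = fR tl hd S f v) ∧
  (I.filter (fun e => starTail tl S f e = none)).card = 0

/-- Weight function on the arcs of `D_+*`: `1` on the added parallel copies and `0`
on the arcs of `A*`. -/
def copyWeight {A C T' : Type} : (A ⊕ C) ⊕ T' → ℕ
  | Sum.inl (Sum.inr _) => 1
  | _ => 0

/-!
Both directions go through the Kamiyama–Katoh–Takizawa theorem, using that reachability, and
with it `R_D`, `f(R_D(·))` and the vertex sets `V^i_D ∪ {s*}`, is unchanged by adding arcs
parallel to existing ones. Given a connector `B` with `|B| = opt_D`, a complete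
`(D + B)*`-intersection has `∑ f(R_D(v)) = |A| + f(S) + opt_D` arcs, so it uses every arc;
sending the `k`-th arc of `B` to the `k`-th copy of an arc parallel to it gives a complete
`D_+*`-intersection of weight `opt_D`. Conversely, the copies used by a complete
`D_+*`-intersection of weight `opt_D` are `opt_D` arcs parallel to `A`; renaming them as the arcs
of `B` gives a complete `(D + B)*`-intersection, and KKT turns it into the required connectivity.
-/

section Parallel

variable {V E₁ E₂ : Type} {t₁ h₁ : E₁ → V} {t₂ h₂ : E₂ → V}

theorem ArcReach.of_parallelTo (hpar : ParallelTo t₂ h₂ t₁ h₁) {u w : V}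
    (h : ArcReach t₁ h₁ Set.univ u w) : ArcReach t₂ h₂ Set.univ u w := by
  induction h with
  | refl => exact .refl
  | tail _ hstep ih =>
    obtain ⟨e, -, rfl, rfl⟩ := hstep
    obtain ⟨e', hte, hhe⟩ := hpar e
    exact ih.tail ⟨e', Set.mem_univ _, hte, hhe⟩

theorem fR_eq_of_parallelTo (h₁₂ : ParallelTo t₂ h₂ t₁ h₁) (h₂₁ : ParallelTo t₁ h₁ t₂ h₂)
    (S : Finset V) (f : V → ℕ) : fR t₁ h₁ S f = fR t₂ h₂ S f := by
  ext v
  unfold fR RD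
  congr 1
  exact Finset.filter_congr fun s _ => ⟨.of_parallelTo h₁₂, .of_parallelTo h₂₁⟩

theorem starSpan_eq_of_parallelTo (h₁₂ : ParallelTo t₂ h₂ t₁ h₁)
    (h₂₁ : ParallelTo t₁ h₁ t₂ h₂) (s : V) : starSpan t₁ h₁ s = starSpan t₂ h₂ s := by
  ext x
  refine or_congr Iff.rfl ⟨?_, ?_⟩ <;> rintro ⟨v, rfl, hv⟩
  exacts [⟨v, rfl, hv.of_parallelTo h₁₂⟩, ⟨v, rfl, hv.of_parallelTo h₂₁⟩]

end Parallel

section SumElim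

variable {V A B₁ B₂ : Type} {tl hd : A → V}

theorem ParallelTo.sum_elim {t₂ h₂ : B₂ → V} (h : ParallelTo tl hd t₂ h₂) (t₁ h₁ : B₁ → V) :
    ParallelTo (Sum.elim tl t₁) (Sum.elim hd h₁) (Sum.elim tl t₂) (Sum.elim hd h₂) := by
  rintro (a | b)
  · exact ⟨Sum.inl a, rfl, rfl⟩
  · obtain ⟨a, hta, hha⟩ := h b
    exact ⟨Sum.inl a, hta, hha⟩

theorem fR_sum_elim_of_parallelTo {tB hB : B₁ → V} (h : ParallelTo tl hd tB hB)
    (S : Finset V) (f : V → ℕ) : fR (Sum.elim tl tB) (Sum.elim hd hB) S f = fR tl hd S f := by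
  refine fR_eq_of_parallelTo ?_ (fun a => ⟨Sum.inl a, rfl, rfl⟩) S f
  rintro (a | b)
  exacts [⟨a, rfl, rfl⟩, h b]

end SumElim

theorem UConn.image {V E₁ E₂ : Type} {t₁ h₁ : E₁ → V} {t₂ h₂ : E₂ → V} (g : E₁ → E₂)
    (ht : ∀ e, t₂ (g e) = t₁ e) (hh : ∀ e, h₂ (g e) = h₁ e) {P : Set E₁} {u w : V}
    (h : UConn t₁ h₁ P u w) : UConn t₂ h₂ (g '' P) u w := by
  have step : ∀ {a b}, ArcStep t₁ h₁ P a b → ArcStep t₂ h₂ (g '' P) a b :=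
    fun ⟨e, he, hte, hhe⟩ => ⟨g e, ⟨e, he, rfl⟩, (ht e).trans hte, (hh e).trans hhe⟩
  exact Relation.ReflTransGen.mono (fun a b => Or.imp step step) u w h

theorem IsSpanTree.image {V E₁ E₂ : Type} {t₁ h₁ : E₁ → V} {t₂ h₂ : E₂ → V}
    [DecidableEq E₂] (g : E₁ → E₂) (ht : ∀ e, t₂ (g e) = t₁ e) (hh : ∀ e, h₂ (g e) = h₁ e)
    {span : Set V} {T : Finset E₁} (hinj : Set.InjOn g T) (hT : IsSpanTree t₁ h₁ span T) :
    IsSpanTree t₂ h₂ span (T.image g) := by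
  obtain ⟨hmem, hconn, hcard⟩ := hT
  refine ⟨?_, fun u hu w hw => ?_, ?_⟩
  · simp only [Finset.mem_image, forall_exists_index, and_imp, forall_apply_eq_imp_iff₂, ht, hh]
    exact hmem
  · rw [Finset.coe_image]
    exact (hconn u hu w hw).image g ht hh
  · rwa [Finset.card_image_of_injOn hinj]

section Transfer

variable {V E E' : Type} {S : Finset V} {f : V → ℕ} {tE hE : E → V} {tE' hE' : E' → V}

theorem starTail_sumMap {φ : E → E'} (ht : ∀ e, tE' (φ e) = tE e) (x : E ⊕ TreeIdx S f) :
    starTail tE' S f (Sum.map φ id x) = starTail tE S f x := by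
  rcases x with e | i
  · exact congrArg some (ht e)
  · rfl

theorem starHead_sumMap {φ : E → E'} (hh : ∀ e, hE' (φ e) = hE e) (x : E ⊕ TreeIdx S f) :
    starHead hE' S f (Sum.map φ id x) = starHead hE S f x := by
  rcases x with e | i
  · exact congrArg some (hh e)
  · rfl

theorem card_filter_image_of_injOn {α β γ : Type} [DecidableEq β] {g : α → β} {s : Finset α}
    (hinj : Set.InjOn g s) {k : β → γ} {k' : α → γ} (hk : ∀ a, k (g a) = k' a) (c : γ) :
    ((s.image g).filter fun b => k b = c).card = (s.filter fun a => k' a = c).card := by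
  rw [Finset.filter_image, Finset.card_image_of_injOn (hinj.mono (Finset.filter_subset _ _))]
  simp only [hk]

theorem CompleteIntersection.image [DecidableEq E'] (φ : E → E') (ht : ∀ e, tE' (φ e) = tE e)
    (hh : ∀ e, hE' (φ e) = hE e) (hpar : ParallelTo tE hE tE' hE')
    {I : Finset (E ⊕ TreeIdx S f)} (hinj : Set.InjOn (Sum.map φ id) (I : Set (E ⊕ TreeIdx S f)))
    (hI : CompleteIntersection tE hE S f I) :
    CompleteIntersection tE' hE' S f (I.image (Sum.map φ id)) := by
  obtain ⟨⟨J, hdisj, hcover, htree⟩, hdeg, hnone⟩ := hI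
  have hJI : ∀ i, J i ⊆ I := fun i x hx => (hcover x).mpr ⟨i, hx⟩
  have hpar' : ParallelTo tE' hE' tE hE := fun e => ⟨φ e, ht e, hh e⟩
  refine ⟨⟨fun i => (J i).image (Sum.map φ id), fun i j hij => ?_, fun y => ?_, fun i => ?_⟩,
    fun v => ?_, ?_⟩
  · refine Finset.disjoint_left.mpr fun y hyi hyj => ?_
    obtain ⟨x, hxi, rfl⟩ := Finset.mem_image.mp hyi
    obtain ⟨x', hxj, hxx⟩ := Finset.mem_image.mp hyj
    rw [hinj (hJI j hxj) (hJI i hxi) hxx] at hxj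
    exact Finset.disjoint_left.mp (hdisj i j hij) hxi hxj
  · simp only [Finset.mem_image, hcover]
    grind
  · rw [starSpan_eq_of_parallelTo hpar hpar']
    exact (htree i).image _ (starTail_sumMap ht) (starHead_sumMap hh) (hinj.mono (hJI i))
  · rw [fR_eq_of_parallelTo hpar hpar', ← hdeg v]
    convert card_filter_image_of_injOn hinj (starTail_sumMap ht) (some v)
  · rw [← hnone]
    convert card_filter_image_of_injOn hinj (starTail_sumMap ht) none

end Transfer

theorem CompleteIntersection.card_eq {V E : Type} [Fintype V] {tE hE : E → V} {S : Finset V}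
    {f : V → ℕ} {I : Finset (E ⊕ TreeIdx S f)} (hI : CompleteIntersection tE hE S f I) :
    I.card = ∑ v, fR tE hE S f v := by
  rw [Finset.card_eq_sum_card_fiberwise (f := starTail tE S f) (t := Finset.univ)
    fun x _ => Finset.mem_univ _, Fintype.sum_option, hI.2.2, zero_add]
  exact Finset.sum_congr rfl fun v _ => hI.2.1 v

theorem card_treeIdx {V : Type} (S : Finset V) (f : V → ℕ) :
    Fintype.card (TreeIdx S f) = ∑ s ∈ S, f s := by
  rw [Fintype.card_congr (α := TreeIdx S f) (β := Σ s : S, Fin (f s)) (Equiv.refl _),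
    Fintype.card_sigma]
  simp only [Fintype.card_fin]
  exact Finset.sum_coe_sort S f

theorem sum_copyWeight_eq_card {A C T : Type} (I : Finset ((A ⊕ C) ⊕ T)) :
    ∑ e ∈ I, copyWeight e =
      (I.preimage (Sum.inl ∘ Sum.inr) (Sum.inl_injective.comp Sum.inr_injective).injOn).card := by
  rw [← Finset.sum_preimage (Sum.inl ∘ Sum.inr) I _ copyWeight, Finset.card_eq_sum_ones]
  · rfl
  · rintro ((a | c) | t) _ hc
    exacts [rfl, absurd ⟨c, rfl⟩ hc, rfl]

section Copies

variable {V A : Type} {tl hd : A → V} {S : Finset V} {f : V → ℕ}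

theorem exists_completeIntersection_copies [Fintype A] {n : ℕ} {tB hB : Fin n → V}
    (hpar : ParallelTo tl hd tB hB)
    (hI : CompleteIntersection (Sum.elim tl tB) (Sum.elim hd hB) S f Finset.univ) :
    ∃ I : Finset ((A ⊕ A × Fin n) ⊕ TreeIdx S f),
      CompleteIntersection (Sum.elim tl fun p => tl p.1) (Sum.elim hd fun p => hd p.1) S f I ∧
      ∑ e ∈ I, copyWeight e = n := by
  choose a hta hha using hpar
  -- the `k`-th arc of `B` becomes the `k`-th copy of the arc it is parallel to
  let φ : A ⊕ Fin n → A ⊕ A × Fin n := Sum.elim Sum.inl fun k => Sum.inr (a k, k)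
  have hφ : Function.Injective (Sum.map φ (id : TreeIdx S f → TreeIdx S f)) := by
    refine Sum.map_injective.mpr ⟨?_, Function.injective_id⟩
    rintro (x | k) (y | l) h <;> simp_all [φ]
  refine ⟨Finset.univ.image (Sum.map φ id), hI.image φ ?_ ?_ ?_ hφ.injOn, ?_⟩
  · rintro (x | k)
    exacts [rfl, hta k]
  · rintro (x | k)
    exacts [rfl, hha k]
  · exact ParallelTo.sum_elim (fun p : A × Fin n => ⟨p.1, rfl, rfl⟩) _ _
  · rw [Finset.sum_image hφ.injOn, Fintype.sum_sum_type, Fintype.sum_sum_type]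
    simp [φ, copyWeight]

theorem exists_parallel_completeIntersection_of_copies {m : ℕ}
    {I : Finset ((A ⊕ A × Fin m) ⊕ TreeIdx S f)}
    (hI : CompleteIntersection (Sum.elim tl fun p => tl p.1) (Sum.elim hd fun p => hd p.1) S f I) :
    ∃ (n : ℕ) (tB hB : Fin n → V), ParallelTo tl hd tB hB ∧
      (∃ I' : Finset ((A ⊕ Fin n) ⊕ TreeIdx S f),
        CompleteIntersection (Sum.elim tl tB) (Sum.elim hd hB) S f I') ∧
      n = ∑ e ∈ I, copyWeight e := by
  rw [sum_copyWeight_eq_card]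
  set P := I.preimage (Sum.inl ∘ Sum.inr) (Sum.inl_injective.comp Sum.inr_injective).injOn
  let e := P.equivFin
  -- the copies used by `I` are enumerated as the arcs of `B`; unused copies fall back onto `A`
  let ψ : A ⊕ A × Fin m → A ⊕ Fin P.card := Sum.elim Sum.inl fun p =>
    if hp : p ∈ P then Sum.inr (e ⟨p, hp⟩) else Sum.inl p.1
  have hψ : Set.InjOn (Sum.map ψ (id : TreeIdx S f → TreeIdx S f)) I := by
    rintro ((x | p) | i) hx ((y | q) | j) hy h <;> simp_all [ψ, P]
  have hpar : ParallelTo tl hd (fun k => tl (e.symm k).1.1) (fun k => hd (e.symm k).1.1) :=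
    fun k => ⟨_, rfl, rfl⟩
  refine ⟨P.card, _, _, hpar, ⟨_, hI.image ψ ?_ ?_ (hpar.sum_elim _ _) hψ⟩, rfl⟩
  · rintro (x | p)
    · rfl
    · by_cases hp : p ∈ P <;> simp [ψ, hp]
  · rintro (x | p)
    · rfl
    · by_cases hp : p ∈ P <;> simp [ψ, hp]

end Copies

theorem stmt12_general {V A : Type} [Fintype V] [Fintype A]
    (tl hd : A → V) (S : Finset V) (f : V → ℕ)
    (opt : ℕ)
    (hopt : (opt : ℤ) = (∑ v : V, (fR tl hd S f v : ℤ)) -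
        ((Fintype.card A : ℤ) + ∑ s ∈ S, (f s : ℤ)))
    (KKT : ∀ (E : Type) [Fintype E] (tE hE : E → V),
      (∃ I : Finset (E ⊕ TreeIdx S f), CompleteIntersection tE hE S f I) ↔
      (∀ v : V, LambdaGe (starTail tE S f) (starHead hE S f) (some v) none
        (fR tE hE S f v))) :
    (∃ (n : ℕ) (tB hB : Fin n → V),
        ParallelTo tl hd tB hB ∧ IsRootedConnector tl hd S f tB hB ∧ n = opt) ↔
      (∃ I : Finset ((A ⊕ A × Fin opt) ⊕ TreeIdx S f),
        CompleteIntersection (Sum.elim tl (fun p => tl p.1))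
          (Sum.elim hd (fun p => hd p.1)) S f I ∧
        ∑ e ∈ I, copyWeight e = opt) := by
  constructor
  · rintro ⟨n, tB, hB, hpar, hconn, rfl⟩
    have hfR := fR_sum_elim_of_parallelTo hpar S f
    obtain ⟨I, hI⟩ := (KKT _ (Sum.elim tl tB) (Sum.elim hd hB)).mpr (by rwa [hfR])
    have huniv : I = Finset.univ := by
      refine Finset.eq_univ_of_card _ ?_
      rw [hI.card_eq, hfR, Fintype.card_sum, Fintype.card_sum, card_treeIdx, Fintype.card_fin]
      zify
      linarith
    exact exists_completeIntersection_copies hpar (huniv ▸ hI)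
  · rintro ⟨I, hI, hw⟩
    obtain ⟨n, tB, hB, hpar, hI', hn⟩ := exists_parallel_completeIntersection_of_copies hI
    refine ⟨n, tB, hB, hpar, ?_, hn.trans hw⟩
    simpa only [IsRootedConnector, fR_sum_elim_of_parallelTo hpar] using (KKT _ _ _).mp hI'

/-- for `(S,f)`-proper `D`, assuming the Kamiyama–Katoh–Takizawa
theorem (for any directed graph `H` on `V` with the same `S`, `f`: a complete
`H*`-intersection exists iff `λ(v,s*;H*) ≥ f(R_H(v))` for all `v`), there exists a
`D*`-rooted connector of size exactly `opt_D` iff there exists a complete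
`D_+*`-intersection `I` with `w(I) = opt_D`. -/
theorem stmt12 {V A : Type} [Fintype V] [Fintype A]
    (tl hd : A → V) (S : Finset V) (f : V → ℕ)
    (hproper : IsProper tl hd S f)
    (opt : ℕ)
    (hopt : (opt : ℤ) = (∑ v : V, (fR tl hd S f v : ℤ)) -
        ((Fintype.card A : ℤ) + ∑ s ∈ S, (f s : ℤ)))
    (KKT : ∀ (E : Type) [Fintype E] (tE hE : E → V),
      (∃ I : Finset (E ⊕ TreeIdx S f), CompleteIntersection tE hE S f I) ↔
      (∀ v : V, LambdaGe (starTail tE S f) (starHead hE S f) (some v) none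
        (fR tE hE S f v))) :
    (∃ (n : ℕ) (tB hB : Fin n → V),
        ParallelTo tl hd tB hB ∧ IsRootedConnector tl hd S f tB hB ∧ n = opt) ↔
      (∃ I : Finset ((A ⊕ A × Fin opt) ⊕ TreeIdx S f),
        CompleteIntersection (Sum.elim tl (fun p => tl p.1))
          (Sum.elim hd (fun p => hd p.1)) S f I ∧
        ∑ e ∈ I, copyWeight e = opt) :=
  stmt12_general tl hd S f opt hopt KKT
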